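/- arXiv:1207.0525 — 4 statements merged into one kernel-verified Lean document; each statement's English description precedes it below -/
import Mathlib

section
/- For any n, the generating function identity ∏_{i≥1} (1 + (-x)^i)^{-1} = ∏_{i≥1} (1 + x^{2i-1}) holds as formal power series; consequently, the number of partitions λ of n with n - ℓ(λ) even minus the number with n - ℓ(λ) odd equals the number of strict odd partitions of n. -/
/-!
Put `Y = -x`. Multiplying by `∏_{i ≤ m} (1 - Y^i)` shows
`∏_{i ≤ m} (1 + Y^i) · ∏_{i ≤ m} (1 - Y^{2i-1}) = ∏_{m < i ≤ 2m} (1 - Y^i)`, and the right-hand side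
is `1` modulo `x^{m+1}`. Since `1 - Y^{2i-1} = 1 + x^{2i-1}`, the two products of the identity
agree up to degree `m`. As partition generating functions, the left-hand side weighs a partition
`λ ⊢ n` by `∏_{k ∈ λ} (-1)^{k-1} = (-1)^{n - ℓ(λ)}`, while the right-hand side counts strict odd
partitions; factors `≡ 1` modulo `x^{n+1}` do not affect the coefficient of `x^n`, so the
truncated products suffice.
-/

open Finset PowerSeries Filter
open scoped PowerSeries.WithPiTopology

section EulerProduct

variable {R : Type*} [CommRing R]

theorem prod_range_two_mul_one_sub_pow (Y : R) (m : ℕ) :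
    ∏ i ∈ range (2 * m), (1 - Y ^ (i + 1)) =
      (∏ i ∈ range m, (1 - Y ^ (2 * i + 1))) * ∏ i ∈ range m, (1 - Y ^ (2 * i + 2)) := by
  induction m with
  | zero => simp
  | succ m ih =>
    rw [Nat.mul_succ, prod_range_succ, prod_range_succ, ih, prod_range_succ, prod_range_succ]
    ring

theorem prod_one_add_pow_mul_prod_one_sub_odd_pow [IsDomain R] (Y : R)
    (hY : ∀ k, Y ^ (k + 1) ≠ 1) (m : ℕ) :
    (∏ i ∈ range m, (1 + Y ^ (i + 1))) * ∏ i ∈ range m, (1 - Y ^ (2 * i + 1)) =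
      ∏ i ∈ range m, (1 - Y ^ (m + i + 1)) := by
  have hP : ∏ i ∈ range m, (1 - Y ^ (i + 1)) ≠ 0 :=
    prod_ne_zero_iff.mpr fun i _ => sub_ne_zero.mpr (hY i).symm
  refine mul_left_cancel₀ hP ?_
  have hsq : (∏ i ∈ range m, (1 - Y ^ (i + 1))) * ∏ i ∈ range m, (1 + Y ^ (i + 1)) =
      ∏ i ∈ range m, (1 - Y ^ (2 * i + 2)) := by
    rw [← prod_mul_distrib]
    exact prod_congr rfl fun i _ => by ring
  calc _ = (∏ i ∈ range m, (1 - Y ^ (2 * i + 1))) * ∏ i ∈ range m, (1 - Y ^ (2 * i + 2)) := by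
        rw [← hsq]; ring
    _ = ∏ i ∈ range (m + m), (1 - Y ^ (i + 1)) := by
        rw [← two_mul, prod_range_two_mul_one_sub_pow]
    _ = _ := prod_range_add _ m m

end EulerProduct

theorem coeff_prod_inv_one_add_neg_X_pow {K : Type*} [Field K] (N : ℕ) :
    coeff N (∏ i ∈ range (N + 1), ((1 : K⟦X⟧) + (-X) ^ (i + 1))⁻¹) =
      coeff N (∏ i ∈ range (N + 1), ((1 : K⟦X⟧) + X ^ (2 * i + 1))) := by
  set A := ∏ i ∈ range (N + 1), ((1 : K⟦X⟧) + (-X) ^ (i + 1))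
  set B := ∏ i ∈ range (N + 1), ((1 : K⟦X⟧) + X ^ (2 * i + 1))
  set L := ∏ i ∈ range (N + 1), ((1 : K⟦X⟧) + (-X) ^ (i + 1))⁻¹
  have hLA : L * A = 1 := by
    rw [← prod_mul_distrib]
    exact prod_eq_one fun i _ => PowerSeries.inv_mul_cancel _ (by simp)
  have hAB : A * B = ∏ i ∈ range (N + 1), (1 - (-X : K⟦X⟧) ^ (N + 1 + i + 1)) := by
    rw [← prod_one_add_pow_mul_prod_one_sub_odd_pow (-X : K⟦X⟧) ?_ (N + 1)]
    · congr 1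
      refine prod_congr rfl fun i _ => ?_
      rw [Odd.neg_pow ⟨i, rfl⟩, sub_neg_eq_add]
    · intro k h
      simpa using congrArg constantCoeff h
  calc coeff N L = coeff N (L * (A * B)) := by
        rw [hAB, coeff_mul_prod_one_sub_of_lt_order]
        intro i _
        rw [order_pow, order_neg, order_X, nsmul_one]
        exact_mod_cast (by omega : N < N + 1 + i + 1)
    _ = coeff N B := by rw [← mul_assoc, hLA, one_mul]

theorem PowerSeries.coeff_prod_eq_of_hasProd {R ι : Type*} [CommRing R] [TopologicalSpace R]
    [T2Space R] {f : ι → R⟦X⟧} {P : R⟦X⟧} (hf : HasProd f P) {N : ℕ} {s : Finset ι}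
    (hs : ∀ i ∉ s, (N : ℕ∞) < (1 - f i).order) :
    coeff N (∏ i ∈ s, f i) = coeff N P := by
  classical
  have hconst : ∀ t ⊇ s, coeff N (∏ i ∈ t, f i) = coeff N (∏ i ∈ s, f i) := by
    intro t hst
    calc coeff N (∏ i ∈ t, f i)
        = coeff N ((∏ i ∈ s, f i) * ∏ i ∈ t \ s, (1 - (1 - f i))) := by
          rw [mul_comm, prod_congr rfl fun i _ => sub_sub_cancel 1 (f i), prod_sdiff hst]
      _ = _ := coeff_mul_prod_one_sub_of_lt_order _ _ _ _ fun i hi => hs i (mem_sdiff.mp hi).2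
  refine tendsto_nhds_unique ?_ (((WithPiTopology.continuous_coeff R N).tendsto P).comp hf)
  exact tendsto_const_nhds.congr' ((eventually_ge_atTop s).mono fun t ht => (hconst t ht).symm)

theorem Multiset.toFinsupp_prod_pow {α M : Type*} [DecidableEq α] [CommMonoid M]
    (s : Multiset α) (a : α → M) : s.toFinsupp.prod (fun k c => a k ^ c) = (s.map a).prod := by
  rw [Finset.prod_multiset_map_count, Finsupp.prod, Multiset.toFinsupp_support]
  rfl

theorem Multiset.prod_map_pow_eq_pow_sum {M : Type*} [CommMonoid M] (a : M) (s : Multiset ℕ) :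
    (s.map (a ^ ·)).prod = a ^ s.sum := by
  induction s using Multiset.induction_on with
  | empty => simp
  | cons k s ih => simp [ih, pow_add]

theorem Finset.sum_neg_one_pow_eq_card_even_sub_card_odd {α R : Type*} [Ring R]
    (s : Finset α) (g : α → ℕ) :
    ∑ x ∈ s, (-1 : R) ^ g x = #{x ∈ s | Even (g x)} - #{x ∈ s | Odd (g x)} := by
  have heven : ∀ x ∈ s.filter fun x => Even (g x), (-1 : R) ^ g x = 1 :=
    fun x hx => (mem_filter.mp hx).2.neg_one_pow
  have hodd : ∀ x ∈ s.filter fun x => ¬Even (g x), (-1 : R) ^ g x = -1 :=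
    fun x hx => (Nat.not_even_iff_odd.mp (mem_filter.mp hx).2).neg_one_pow
  rw [← sum_filter_add_sum_filter_not s fun x => Even (g x), sum_congr rfl heven,
    sum_congr rfl hodd]
  simp [sub_eq_add_neg, Nat.not_even_iff_odd]

namespace Nat.Partition

theorem sum_parts_sub_one {n : ℕ} (p : n.Partition) :
    (p.parts.map (· - 1)).sum = n - Multiset.card p.parts := by
  have h : (p.parts.map (· - 1)).sum + Multiset.card p.parts = n :=
    calc _ = (p.parts.map fun k => k - 1 + 1).sum := by simp [Multiset.sum_map_add]
      _ = p.parts.sum := by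
        rw [Multiset.map_congr rfl fun k hk => Nat.sub_add_cancel (p.parts_pos hk),
          Multiset.map_id']
      _ = n := p.parts_sum
  omega

theorem coeff_genFun_neg_one_pow {R : Type*} [CommRing R] (n : ℕ) :
    coeff n (genFun fun k c => ((-1 : R) ^ (k - 1)) ^ c) =
      ∑ p : n.Partition, (-1 : R) ^ (n - Multiset.card p.parts) := by
  rw [coeff_genFun]
  refine sum_congr rfl fun p _ => ?_
  rw [Multiset.toFinsupp_prod_pow, ← p.sum_parts_sub_one, ← Multiset.prod_map_pow_eq_pow_sum,
    Multiset.map_map]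
  rfl

theorem hasProd_genFun_neg_one_pow {K : Type*} [Field K] [TopologicalSpace K]
    [IsTopologicalRing K] [T2Space K] :
    HasProd (fun i => ((1 : K⟦X⟧) + (-X) ^ (i + 1))⁻¹)
      (genFun fun k c => ((-1 : K) ^ (k - 1)) ^ c) := by
  convert! hasProd_genFun (fun k c => ((-1 : K) ^ (k - 1)) ^ c) using 1
  funext i
  set Y : K⟦X⟧ := -(-X) ^ (i + 1)
  have hY : constantCoeff Y = 0 := by simp [Y]
  have hterm : ∀ j, ((-1 : K) ^ (i + 1 - 1)) ^ (j + 1) • (X : K⟦X⟧) ^ ((i + 1) * (j + 1)) =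
      Y ^ (j + 1) := by
    intro j
    rw [smul_eq_C_mul, pow_mul, map_pow, ← mul_pow]
    congr 1
    simp only [Y, neg_pow (X : K⟦X⟧), map_pow, map_neg, map_one, add_tsub_cancel_right]
    ring
  have hgeom : ∑' j, Y ^ j = (1 + (-X) ^ (i + 1))⁻¹ := by
    rw [eq_inv_iff_mul_eq_one (by simp), ← sub_neg_eq_add]
    exact WithPiTopology.tsum_pow_mul_one_sub_of_constantCoeff_eq_zero hY
  rw [tsum_congr hterm, ← hgeom,
    (WithPiTopology.summable_pow_of_constantCoeff_eq_zero hY).tsum_eq_zero_add, pow_zero]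

theorem coeff_genFun_odd_distinct {R : Type*} [CommSemiring R] (n : ℕ) :
    coeff n (genFun fun k c => if Odd k ∧ c = 1 then (1 : R) else 0) =
      #{p : n.Partition | p.parts.Nodup ∧ ∀ i ∈ p.parts, Odd i} := by
  rw [coeff_genFun, card_filter, Nat.cast_sum]
  refine sum_congr rfl fun p _ => ?_
  rw [Finsupp.prod, prod_boole]
  simp [Multiset.nodup_iff_count_eq_one, forall_and, and_comm]

theorem hasProd_genFun_odd_distinct {R : Type*} [CommSemiring R] [TopologicalSpace R]
    [T2Space R] :
    HasProd (fun i => if Even i then (1 : R⟦X⟧) + X ^ (i + 1) else 1)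
      (genFun fun k c => if Odd k ∧ c = 1 then (1 : R) else 0) := by
  convert! hasProd_genFun (fun k c => if Odd k ∧ c = 1 then (1 : R) else 0) using 1
  funext i
  rw [tsum_eq_single 0 fun j hj => by simp [hj]]
  by_cases hi : Even i <;> simp [Nat.odd_add_one, hi]

end Nat.Partition

theorem sum_neg_one_pow_sub_card_parts_eq_coeff {K : Type*} [Field K] (n : ℕ) :
    ∑ p : n.Partition, (-1 : K) ^ (n - Multiset.card p.parts) =
      coeff n (∏ i ∈ range (n + 1), ((1 : K⟦X⟧) + (-X) ^ (i + 1))⁻¹) := by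
  -- The topology only serves to state `HasProd`; any Hausdorff one gives the same coefficients.
  let _ : TopologicalSpace K := ⊥
  have _ : DiscreteTopology K := ⟨rfl⟩
  rw [← Nat.Partition.coeff_genFun_neg_one_pow,
    coeff_prod_eq_of_hasProd Nat.Partition.hasProd_genFun_neg_one_pow]
  intro i hi
  set u : K⟦X⟧ := 1 + (-X) ^ (i + 1)
  have hu : 1 - u⁻¹ = (-X) ^ (i + 1) * u⁻¹ := by
    rw [← add_sub_cancel_left 1 ((-X : K⟦X⟧) ^ (i + 1)), sub_mul, one_mul,
      PowerSeries.mul_inv_cancel _ (by simp)]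
  rw [hu, order_mul, order_pow, order_neg, order_X, nsmul_one]
  have hi : n < i + 1 := by simp at hi; omega
  exact lt_of_lt_of_le (by exact_mod_cast hi) le_self_add

theorem card_odd_distinct_eq_coeff {R : Type*} [CommRing R] (n : ℕ) :
    (#{p : n.Partition | p.parts.Nodup ∧ ∀ i ∈ p.parts, Odd i} : R) =
      coeff n (∏ i ∈ range (n + 1), ((1 : R⟦X⟧) + X ^ (2 * i + 1))) := by
  nontriviality R
  let _ : TopologicalSpace R := ⊥
  have _ : DiscreteTopology R := ⟨rfl⟩
  have hs : ∀ i ∉ (range (n + 1)).image (2 * ·),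
      (n : ℕ∞) < (1 - if Even i then (1 : R⟦X⟧) + X ^ (i + 1) else 1).order := by
    intro i hi
    by_cases he : Even i
    · obtain ⟨a, rfl⟩ := he
      have ha : n < a := by simpa [← two_mul] using hi
      rw [if_pos ⟨a, rfl⟩, sub_add_cancel_left, order_neg, order_X_pow]
      exact_mod_cast (by omega : n < a + a + 1)
    · simp [he]
  rw [← Nat.Partition.coeff_genFun_odd_distinct,
    ← coeff_prod_eq_of_hasProd (Nat.Partition.hasProd_genFun_odd_distinct (R := R)) hs,
    prod_image fun a _ b _ h => by simpa using h]
  simp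

/-- The generating function identity `∏_{i≥1} (1 + (-x)^i)⁻¹ = ∏_{i≥1} (1 + x^{2i-1})`
(stated coefficientwise with suitably truncated products), and its combinatorial
consequence: for every `n`, the number of partitions `λ` of `n` with `n - ℓ(λ)` even minus
the number with `n - ℓ(λ)` odd equals the number of strict odd partitions of `n`. -/
theorem gf_identity_and_strict_odd_count :
    (∀ N : ℕ,
      PowerSeries.coeff N (∏ i ∈ Finset.range (N + 1),
          ((1 : PowerSeries ℚ) + (-PowerSeries.X) ^ (i + 1))⁻¹) =
      PowerSeries.coeff N (∏ i ∈ Finset.range (N + 1),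
          ((1 : PowerSeries ℚ) + PowerSeries.X ^ (2 * i + 1)))) ∧
    (∀ n : ℕ,
      ((Finset.univ.filter
          (fun p : n.Partition => Even (n - Multiset.card p.parts))).card : ℤ) -
      ((Finset.univ.filter
          (fun p : n.Partition => Odd (n - Multiset.card p.parts))).card : ℤ) =
      ((Finset.univ.filter
          (fun p : n.Partition => p.parts.Nodup ∧ ∀ i ∈ p.parts, Odd i)).card : ℤ)) := by
  refine ⟨coeff_prod_inv_one_add_neg_X_pow, fun n => ?_⟩
  have hQ : ∑ p : n.Partition, (-1 : ℚ) ^ (n - Multiset.card p.parts) =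
      #{p : n.Partition | p.parts.Nodup ∧ ∀ i ∈ p.parts, Odd i} := by
    rw [sum_neg_one_pow_sub_card_parts_eq_coeff, coeff_prod_inv_one_add_neg_X_pow,
      card_odd_distinct_eq_coeff]
  rw [← sum_neg_one_pow_eq_card_even_sub_card_odd]
  exact_mod_cast hQ
end

section
/- The number of strict odd partitions of n equals the number of self-conjugate partitions of n. -/
/-!
Cut a Young diagram into diagonal hooks, the `k`-th one consisting of the cells `(i, j)`
with `min i j = k`. If the diagram is self-conjugate, the arm and the leg of the `k`-th hook
have the same length `aₖ = rowLen k - k - 1`, so the hook has `2 aₖ + 1` cells, and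
`a₀ > a₁ > ⋯` because row lengths are non-increasing. Conversely, for any strictly decreasing
`a₀ > a₁ > ⋯` the corners `k + aₖ` of the hooks are non-increasing, which is exactly what
makes the union of the hooks a Young diagram. Hence self-conjugate diagrams with `n` cells
correspond to finite sets `{aₖ}` with `∑ (2 aₖ + 1) = n`, that is, to strict odd partitions
of `n`.
-/

open Finset

namespace List

variable {α : Type*}

lemma SortedGT.add_getD_le_add_getD {L : List ℕ} (hL : L.SortedGT) {i j : ℕ} (hij : i ≤ j)
    (hj : j < L.length) : j + L.getD j 0 ≤ i + L.getD i 0 := by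
  induction j, hij using Nat.le_induction with
  | base => rfl
  | succ j hij ih =>
    have step : L.getD (j + 1) 0 < L.getD j 0 := by
      rw [getD_eq_getElem _ _ hj, getD_eq_getElem _ _ (by omega)]
      exact hL.getElem_gt_getElem_of_lt (by omega)
    have := ih (by omega)
    omega

lemma image_getD_range_length [DecidableEq α] (L : List α) (d : α) :
    (Finset.range L.length).image (L.getD · d) = L.toFinset := by
  ext a
  simp only [mem_image, Finset.mem_range, mem_toFinset, mem_iff_getElem]
  constructor
  · rintro ⟨k, hk, rfl⟩
    exact ⟨k, hk, (getD_eq_getElem _ _ hk).symm⟩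
  · rintro ⟨k, hk, rfl⟩
    exact ⟨k, hk, getD_eq_getElem _ _ hk⟩

lemma sum_range_length_getD (L : List ℕ) (f : ℕ → ℕ) :
    ∑ k ∈ Finset.range L.length, f (L.getD k 0) = (L.map f).sum := by
  induction L with
  | nil => simp
  | cons a L ih =>
    simp only [length_cons, Finset.sum_range_succ', getD_cons_succ, getD_cons_zero, ih, map_cons,
      sum_cons, add_comm]

end List

namespace YoungDiagram

def diagonalHook (k a : ℕ) : Finset (ℕ × ℕ) :=
  {k} ×ˢ Icc k (k + a) ∪ Icc (k + 1) (k + a) ×ˢ {k}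

lemma mem_diagonalHook {k a : ℕ} {c : ℕ × ℕ} :
    c ∈ diagonalHook k a ↔ min c.1 c.2 = k ∧ max c.1 c.2 ≤ k + a := by
  simp only [diagonalHook, mem_union, mem_product, mem_singleton, mem_Icc]
  omega

lemma card_diagonalHook (k a : ℕ) : #(diagonalHook k a) = 2 * a + 1 := by
  rw [diagonalHook, card_union_of_disjoint, card_product, card_product]
  · simp only [card_singleton, Nat.card_Icc]
    omega
  · rw [disjoint_left]
    intro c
    simp only [mem_product, mem_singleton, mem_Icc]
    omega

def diagonalHooks (L : List ℕ) : Finset (ℕ × ℕ) :=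
  (range L.length).biUnion fun k => diagonalHook k (L.getD k 0)

lemma mem_diagonalHooks {L : List ℕ} {c : ℕ × ℕ} :
    c ∈ diagonalHooks L ↔
      min c.1 c.2 < L.length ∧ max c.1 c.2 ≤ min c.1 c.2 + L.getD (min c.1 c.2) 0 := by
  simp only [diagonalHooks, mem_biUnion, mem_range, mem_diagonalHook]
  constructor
  · rintro ⟨k, hk, hmin, hmax⟩
    subst hmin
    exact ⟨hk, hmax⟩
  · rintro ⟨hk, hmax⟩
    exact ⟨_, hk, rfl, hmax⟩

lemma card_diagonalHooks (L : List ℕ) : #(diagonalHooks L) = (L.map (2 * · + 1)).sum := by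
  rw [diagonalHooks, card_biUnion]
  · simp only [card_diagonalHook]
    exact L.sum_range_length_getD (2 * · + 1)
  · intro k _ k' _ hkk'
    rw [Function.onFun, disjoint_left]
    intro c hk hk'
    exact hkk' ((mem_diagonalHook.1 hk).1.symm.trans (mem_diagonalHook.1 hk').1)

lemma isLowerSet_diagonalHooks {L : List ℕ} (hL : L.SortedGT) :
    IsLowerSet (diagonalHooks L : Set (ℕ × ℕ)) := by
  rintro c d ⟨hd₁, hd₂⟩ hc
  simp only [mem_coe, mem_diagonalHooks] at hc ⊢
  have hmin : min d.1 d.2 ≤ min c.1 c.2 := by omega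
  have := hL.add_getD_le_add_getD hmin hc.1
  omega

def ofDiagonalArms (s : Finset ℕ) : YoungDiagram where
  cells := diagonalHooks (s.sort (· ≥ ·))
  isLowerSet := isLowerSet_diagonalHooks (sortedGT_sort s)

lemma mem_ofDiagonalArms {s : Finset ℕ} {c : ℕ × ℕ} :
    c ∈ ofDiagonalArms s ↔ min c.1 c.2 < #s ∧
      max c.1 c.2 ≤ min c.1 c.2 + (s.sort (· ≥ ·)).getD (min c.1 c.2) 0 := by
  rw [← mem_cells, ← length_sort (· ≥ ·)]
  exact mem_diagonalHooks

lemma transpose_ofDiagonalArms (s : Finset ℕ) :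
    (ofDiagonalArms s).transpose = ofDiagonalArms s := by
  ext c
  simp only [mem_cells, mem_transpose, mem_ofDiagonalArms, Prod.fst_swap, Prod.snd_swap, min_comm,
    max_comm]

lemma card_ofDiagonalArms (s : Finset ℕ) :
    (ofDiagonalArms s).card = ∑ m ∈ s, (2 * m + 1) := by
  rw [YoungDiagram.card, ofDiagonalArms, card_diagonalHooks, Finset.sum_eq_multiset_sum,
    ← sort_eq s (· ≥ ·), Multiset.map_coe, Multiset.sum_coe]

variable {Y : YoungDiagram}

lemma exists_notMem_diag (Y : YoungDiagram) : ∃ k, (k, k) ∉ Y :=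
  ⟨Y.colLen 0, fun h =>
    (mem_iff_lt_colLen.1 (Y.up_left_mem le_rfl (Nat.zero_le _) h)).false⟩

/-- The side of the Durfee square. -/
def diagLen (Y : YoungDiagram) : ℕ := Nat.find Y.exists_notMem_diag

lemma mk_mem_iff_lt_diagLen {k : ℕ} : (k, k) ∈ Y ↔ k < Y.diagLen := by
  rw [diagLen, Nat.lt_find_iff]
  refine ⟨fun h m hm => not_not.2 (Y.up_left_mem hm hm h), fun h => not_not.1 (h k le_rfl)⟩

lemma lt_rowLen_of_lt_diagLen {k : ℕ} (hk : k < Y.diagLen) : k < Y.rowLen k :=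
  mem_iff_lt_rowLen.1 (mk_mem_iff_lt_diagLen.2 hk)

lemma mem_iff_max_lt_rowLen_min (hY : Y.transpose = Y) {i j : ℕ} :
    (i, j) ∈ Y ↔ max i j < Y.rowLen (min i j) := by
  rcases le_total i j with h | h
  · rw [max_eq_right h, min_eq_left h, mem_iff_lt_rowLen]
  · rw [max_eq_left h, min_eq_right h, ← mem_iff_lt_rowLen, ← hY, mem_transpose, hY,
      Prod.swap_prod_mk]

def diagonalArms (Y : YoungDiagram) : Finset ℕ :=
  (range Y.diagLen).image fun k => Y.rowLen k - (k + 1)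

lemma sort_diagonalArms (Y : YoungDiagram) :
    Y.diagonalArms.sort (· ≥ ·) = (List.range Y.diagLen).map fun k => Y.rowLen k - (k + 1) := by
  have hsorted : ((List.range Y.diagLen).map fun k => Y.rowLen k - (k + 1)).SortedGT := by
    refine List.sortedGT_iff_pairwise.2 (List.pairwise_map.2 ?_)
    refine List.pairwise_lt_range.imp_of_mem fun {i j} _ hj hij => ?_
    have := lt_rowLen_of_lt_diagLen (List.mem_range.1 hj)
    have := Y.rowLen_anti i j hij.le
    omega
  rw [← (List.toFinset_sort (· ≥ ·) hsorted.nodup).2 (hsorted.pairwise.imp le_of_lt)]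
  rfl

lemma card_diagonalArms (Y : YoungDiagram) : #Y.diagonalArms = Y.diagLen := by
  rw [← length_sort (· ≥ ·), sort_diagonalArms, List.length_map, List.length_range]

lemma ofDiagonalArms_diagonalArms (hY : Y.transpose = Y) : ofDiagonalArms Y.diagonalArms = Y := by
  have arm {k : ℕ} (hk : k < Y.diagLen) :
      ((List.range Y.diagLen).map fun k => Y.rowLen k - (k + 1)).getD k 0 =
        Y.rowLen k - (k + 1) := by
    rw [List.getD_eq_getElem _ _ (by simpa), List.getElem_map, List.getElem_range]
  ext ⟨i, j⟩
  rw [mem_cells, mem_cells, mem_ofDiagonalArms, card_diagonalArms, sort_diagonalArms,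
    mem_iff_max_lt_rowLen_min hY]
  dsimp only
  constructor
  · rintro ⟨hk, hmax⟩
    have := lt_rowLen_of_lt_diagLen hk
    rw [arm hk] at hmax
    omega
  · intro h
    have hk : min i j < Y.diagLen := by
      rw [← mk_mem_iff_lt_diagLen, mem_iff_lt_rowLen]
      omega
    rw [arm hk]
    exact ⟨hk, by omega⟩

lemma rowLen_ofDiagonalArms {s : Finset ℕ} {k : ℕ} (hk : k < #s) :
    (ofDiagonalArms s).rowLen k = k + (s.sort (· ≥ ·)).getD k 0 + 1 := by
  have mem_row {j : ℕ} (hj : k ≤ j) :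
      (k, j) ∈ ofDiagonalArms s ↔ j ≤ k + (s.sort (· ≥ ·)).getD k 0 := by
    rw [mem_ofDiagonalArms, min_eq_left hj, max_eq_right hj]
    exact and_iff_right hk
  refine le_antisymm (not_lt.1 fun h => ?_) (mem_iff_lt_rowLen.1 ((mem_row le_self_add).2 le_rfl))
  have := (mem_row (by omega)).1 (mem_iff_lt_rowLen.2 h)
  omega

lemma diagLen_ofDiagonalArms (s : Finset ℕ) : (ofDiagonalArms s).diagLen = #s :=
  eq_of_forall_lt_iff fun k => by
    rw [← mk_mem_iff_lt_diagLen, mem_ofDiagonalArms, min_self, max_self]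
    exact and_iff_left (Nat.le_add_right k _)

lemma diagonalArms_ofDiagonalArms (s : Finset ℕ) : (ofDiagonalArms s).diagonalArms = s := by
  have arm : ∀ k ∈ range #s,
      (ofDiagonalArms s).rowLen k - (k + 1) = (s.sort (· ≥ ·)).getD k 0 := fun k hk => by
    rw [rowLen_ofDiagonalArms (mem_range.1 hk)]
    omega
  rw [diagonalArms, diagLen_ofDiagonalArms, image_congr arm, ← length_sort (· ≥ ·),
    List.image_getD_range_length, sort_toFinset]

def selfConjugateEquiv : Finset ℕ ≃ {Y : YoungDiagram // Y.transpose = Y} where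
  toFun s := ⟨ofDiagonalArms s, transpose_ofDiagonalArms s⟩
  invFun Y := Y.1.diagonalArms
  left_inv := diagonalArms_ofDiagonalArms
  right_inv Y := Subtype.ext (ofDiagonalArms_diagonalArms Y.2)

end YoungDiagram

lemma Multiset.map_two_mul_add_one_map_div_two {s : Multiset ℕ} (hs : ∀ i ∈ s, Odd i) :
    (s.map (· / 2)).map (2 * · + 1) = s := by
  rw [Multiset.map_map]
  exact (Multiset.map_congr rfl fun i hi => Nat.two_mul_div_two_add_one_of_odd (hs i hi)).trans
    s.map_id

def strictOddPartitionEquiv (n : ℕ) :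
    {p : n.Partition // p.parts.Nodup ∧ ∀ i ∈ p.parts, Odd i} ≃
      {s : Finset ℕ // ∑ m ∈ s, (2 * m + 1) = n} where
  toFun p :=
    have hp := Multiset.map_two_mul_add_one_map_div_two p.2.2
    ⟨⟨p.1.parts.map (· / 2), Multiset.Nodup.of_map _ (hp ▸ p.2.1)⟩,
      (congrArg Multiset.sum hp).trans p.1.parts_sum⟩
  invFun s :=
    ⟨⟨s.1.1.map (2 * · + 1), by simp, s.2⟩,
      s.1.2.map fun _ _ h => by simpa using h, by simp⟩
  left_inv p := Subtype.ext (Nat.Partition.ext (Multiset.map_two_mul_add_one_map_div_two p.2.2))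
  right_inv s := Subtype.ext <| Finset.val_injective <| (Multiset.map_map _ _ _).trans <|
    (Multiset.map_congr rfl fun m _ => show (2 * m + 1) / 2 = m by omega).trans s.1.1.map_id

/-- The number of strict odd partitions of `n` (all parts odd and distinct) equals the
number of self-conjugate partitions of `n` (realized as Young diagrams with `n` cells
fixed by transposition). -/
theorem card_strict_odd_eq_card_self_conjugate (n : ℕ) :
    Nat.card {p : n.Partition // p.parts.Nodup ∧ ∀ i ∈ p.parts, Odd i} =
    Nat.card {Y : YoungDiagram // Y.card = n ∧ Y.transpose = Y} :=
  calc _ = Nat.card {s : Finset ℕ // ∑ m ∈ s, (2 * m + 1) = n} :=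
        Nat.card_congr (strictOddPartitionEquiv n)
    _ = Nat.card {Y : {Y : YoungDiagram // Y.transpose = Y} // Y.1.card = n} :=
        Nat.card_congr (YoungDiagram.selfConjugateEquiv.subtypeEquiv fun s => by
          rw [← YoungDiagram.card_ofDiagonalArms]; rfl)
    _ = _ := Nat.card_congr <|
        (Equiv.subtypeSubtypeEquivSubtypeInter (fun Y : YoungDiagram => Y.transpose = Y)
          (·.card = n)).trans (Equiv.subtypeEquivRight fun _ => and_comm)
end

section
/- For a partition λ of odd n, define Q(λ,t) = [t^{2n(λ)} ∏_{□∈λ}(1+t^{2c_□+1})/(1-t^{2h_□}) + t^{2n(λ)} ∏_{□∈λ}(t^{2c_□}+t)/(1-t^{2h_□})] · ∏_{i=1}^{n-1}(1-t^{2i}) · (1-t^n). Then Q(λ,t) = t^{n(n-1)} Q(λ, 1/t). -/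
/-!
Under `t ↦ t⁻¹` both cell factors `(1 + t^(2c+1)) / (1 - t^(2h))` and `(t^(2c) + t) / (1 - t^(2h))`
pick up the same factor `-t^(2h - 2c - 1)`. Since the arm lengths sum to `n(λ')` and the leg
lengths to `n(λ)`, the hook lengths sum to `n(λ) + n(λ') + |λ|` while the contents sum to
`n(λ') - n(λ)`, so `∑ (2h - 2c - 1) = 4 n(λ) + |λ|`. Hence the bracket gets multiplied by
`(-1)^|λ| t^|λ|`, and `∏_{i<n} (1 - t^(2i)) · (1 - t^n)` by `(-1)^n t^(-n²)`; the signs cancel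
because `|λ| = n`.
-/

/-- The hook length of the cell `c = (i, j)` of a Young diagram. -/
def YoungDiagram.hookLen (Y : YoungDiagram) (c : ℕ × ℕ) : ℕ :=
  (Y.rowLen c.1 - c.2) + (Y.colLen c.2 - c.1) - 1

/-- The statistic `n(λ) = ∑_{i ≥ 1} (i-1) λ_i`: the sum over all cells of the
(0-indexed) row index. -/
def YoungDiagram.nStat (Y : YoungDiagram) : ℕ := ∑ c ∈ Y.cells, c.1

/-- `Q(λ,t) = [t^{2n(λ)} ∏_{□∈λ}(1+t^{2c_□+1})/(1-t^{2h_□})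
  + t^{2n(λ)} ∏_{□∈λ}(t^{2c_□}+t)/(1-t^{2h_□})] · ∏_{i=1}^{n-1}(1-t^{2i}) · (1-t^n)`. -/
noncomputable def spinFakeDegD (K : Type*) [Field K] (Y : YoungDiagram) (n : ℕ) (t : K) : K :=
  (t ^ (2 * Y.nStat) *
      ∏ c ∈ Y.cells,
        (1 + t ^ (2 * ((c.2 : ℤ) - (c.1 : ℤ)) + 1)) / (1 - t ^ (2 * Y.hookLen c)) +
    t ^ (2 * Y.nStat) *
      ∏ c ∈ Y.cells,
        (t ^ (2 * ((c.2 : ℤ) - (c.1 : ℤ))) + t) / (1 - t ^ (2 * Y.hookLen c))) *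
    (∏ i ∈ Finset.range (n - 1), (1 - t ^ (2 * (i + 1)))) * (1 - t ^ n)

section InvFlip

variable {K : Type*} [Field K] {t : K}

theorem zpow_sum₀ (ht : t ≠ 0) {ι : Type*} (s : Finset ι) (k : ι → ℤ) :
    t ^ (∑ i ∈ s, k i) = ∏ i ∈ s, t ^ k i := by
  induction s using Finset.cons_induction with
  | empty => simp
  | cons a s ha ih => rw [Finset.sum_cons, Finset.prod_cons, zpow_add₀ ht, ih]

theorem prod_eq_neg_one_pow_mul_zpow_sum_mul (ht : t ≠ 0) {ι : Type*} {s : Finset ι}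
    {f g : ι → K} {k : ι → ℤ} (h : ∀ i ∈ s, f i = -t ^ k i * g i) :
    ∏ i ∈ s, f i = (-1) ^ s.card * t ^ (∑ i ∈ s, k i) * ∏ i ∈ s, g i := by
  have h' : ∀ i ∈ s, f i = -1 * (t ^ k i * g i) := fun i hi => by rw [h i hi]; ring
  rw [Finset.prod_congr rfl h', Finset.prod_mul_distrib, Finset.prod_const,
    Finset.prod_mul_distrib, zpow_sum₀ ht, mul_assoc]

theorem one_sub_inv_pow (ht : t ≠ 0) (m : ℕ) : 1 - t⁻¹ ^ m = -(t ^ m)⁻¹ * (1 - t ^ m) := by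
  have : t ^ m ≠ 0 := pow_ne_zero m ht
  rw [inv_pow]
  field_simp
  ring

theorem one_add_inv_zpow (ht : t ≠ 0) (e : ℤ) : 1 + t⁻¹ ^ e = t ^ (-e) * (1 + t ^ e) := by
  rw [inv_zpow', mul_add, mul_one, ← zpow_add₀ ht, neg_add_cancel, zpow_zero, add_comm]

theorem inv_zpow_add_inv (ht : t ≠ 0) (e : ℤ) :
    t⁻¹ ^ e + t⁻¹ = t ^ (-(e + 1)) * (t ^ e + t) := by
  rw [inv_zpow', ← zpow_neg_one, mul_add, ← zpow_add₀ ht, ← zpow_add_one₀ ht, add_comm]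
  congr 2 <;> ring

theorem div_one_sub_inv_pow (ht : t ≠ 0) {a b : K} {e : ℤ} (m : ℕ) (hab : a = t ^ (-e) * b) :
    a / (1 - t⁻¹ ^ m) = -t ^ ((m : ℤ) - e) * (b / (1 - t ^ m)) := by
  rw [hab, one_sub_inv_pow ht, zpow_sub₀ ht, zpow_natCast, zpow_neg]
  have : t ^ m ≠ 0 := pow_ne_zero m ht
  have : t ^ e ≠ 0 := zpow_ne_zero e ht
  by_cases hm : 1 - t ^ m = 0
  · simp [hm] -- both sides are the junk value `x / 0 = 0`
  · field_simp

theorem prod_range_one_sub_inv_pow (ht : t ≠ 0) (k : ℕ) :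
    ∏ i ∈ Finset.range k, (1 - t⁻¹ ^ (2 * (i + 1))) =
      (-1) ^ k * (t ^ (k * (k + 1)))⁻¹ * ∏ i ∈ Finset.range k, (1 - t ^ (2 * (i + 1))) := by
  induction k with
  | zero => simp
  | succ k ih =>
    rw [Finset.prod_range_succ, Finset.prod_range_succ, ih, one_sub_inv_pow ht,
      show (k + 1) * (k + 1 + 1) = k * (k + 1) + 2 * (k + 1) by ring, pow_add t, mul_inv]
    ring

end InvFlip

namespace YoungDiagram

def armLen (Y : YoungDiagram) (c : ℕ × ℕ) : ℕ := Y.rowLen c.1 - c.2 - 1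

def legLen (Y : YoungDiagram) (c : ℕ × ℕ) : ℕ := Y.colLen c.2 - c.1 - 1

theorem hookLen_eq_armLen_add_legLen_add_one {Y : YoungDiagram} {c : ℕ × ℕ} (hc : c ∈ Y) :
    Y.hookLen c = Y.armLen c + Y.legLen c + 1 := by
  have hrow := Y.mem_iff_lt_rowLen.1 hc
  have hcol := Y.mem_iff_lt_colLen.1 hc
  unfold hookLen armLen legLen
  omega

-- Reflecting each row (resp. column) exchanges arm lengths with column (resp. row) indices.
theorem sum_cells_armLen (Y : YoungDiagram) :
    ∑ c ∈ Y.cells, Y.armLen c = ∑ c ∈ Y.cells, c.2 := by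
  refine Finset.sum_nbij' (fun c => (c.1, Y.rowLen c.1 - 1 - c.2))
    (fun c => (c.1, Y.rowLen c.1 - 1 - c.2)) ?_ ?_ ?_ ?_ ?_ <;>
  · rintro ⟨i, j⟩ hc
    simp only [mem_cells, mem_iff_lt_rowLen, armLen, Prod.mk.injEq, true_and] at hc ⊢
    omega

theorem sum_cells_legLen (Y : YoungDiagram) :
    ∑ c ∈ Y.cells, Y.legLen c = ∑ c ∈ Y.cells, c.1 := by
  refine Finset.sum_nbij' (fun c => (Y.colLen c.2 - 1 - c.1, c.2))
    (fun c => (Y.colLen c.2 - 1 - c.1, c.2)) ?_ ?_ ?_ ?_ ?_ <;>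
  · rintro ⟨i, j⟩ hc
    simp only [mem_cells, mem_iff_lt_colLen, legLen, Prod.mk.injEq, and_true] at hc ⊢
    omega

theorem sum_cells_hookLen (Y : YoungDiagram) :
    ∑ c ∈ Y.cells, Y.hookLen c = ∑ c ∈ Y.cells, c.2 + ∑ c ∈ Y.cells, c.1 + Y.card := by
  rw [Finset.sum_congr rfl fun c hc =>
      hookLen_eq_armLen_add_legLen_add_one ((mem_cells c).1 hc),
    Finset.sum_add_distrib, Finset.sum_add_distrib, sum_cells_armLen, sum_cells_legLen,
    Finset.sum_const, smul_eq_mul, mul_one]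

theorem sum_cells_two_mul_hookLen_sub_content (Y : YoungDiagram) :
    ∑ c ∈ Y.cells, (((2 * Y.hookLen c : ℕ) : ℤ) - (2 * ((c.2 : ℤ) - c.1) + 1)) =
      ((4 * Y.nStat + Y.card : ℕ) : ℤ) := by
  have h : ∑ c ∈ Y.cells, (Y.hookLen c : ℤ) =
      ∑ c ∈ Y.cells, (c.2 : ℤ) + ∑ c ∈ Y.cells, (c.1 : ℤ) + Y.card := by
    exact_mod_cast Y.sum_cells_hookLen
  push_cast [Finset.sum_sub_distrib, Finset.sum_add_distrib, ← Finset.mul_sum, h, nStat]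
  simp only [Finset.sum_const, nsmul_eq_mul, mul_one]
  ring

variable {K : Type*} [Field K] {t : K}

theorem prod_cells_one_add_div_inv (Y : YoungDiagram) (ht : t ≠ 0) :
    ∏ c ∈ Y.cells, (1 + t⁻¹ ^ (2 * ((c.2 : ℤ) - c.1) + 1)) / (1 - t⁻¹ ^ (2 * Y.hookLen c)) =
      (-1) ^ Y.card * t ^ (4 * Y.nStat + Y.card) *
        ∏ c ∈ Y.cells, (1 + t ^ (2 * ((c.2 : ℤ) - c.1) + 1)) / (1 - t ^ (2 * Y.hookLen c)) := by
  rw [prod_eq_neg_one_pow_mul_zpow_sum_mul ht fun c _ =>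
      div_one_sub_inv_pow ht _ (one_add_inv_zpow ht _),
    sum_cells_two_mul_hookLen_sub_content, zpow_natCast]

theorem prod_cells_add_div_inv (Y : YoungDiagram) (ht : t ≠ 0) :
    ∏ c ∈ Y.cells, (t⁻¹ ^ (2 * ((c.2 : ℤ) - c.1)) + t⁻¹) / (1 - t⁻¹ ^ (2 * Y.hookLen c)) =
      (-1) ^ Y.card * t ^ (4 * Y.nStat + Y.card) *
        ∏ c ∈ Y.cells, (t ^ (2 * ((c.2 : ℤ) - c.1)) + t) / (1 - t ^ (2 * Y.hookLen c)) := by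
  rw [prod_eq_neg_one_pow_mul_zpow_sum_mul ht fun c _ =>
      div_one_sub_inv_pow ht _ (inv_zpow_add_inv ht _),
    sum_cells_two_mul_hookLen_sub_content, zpow_natCast]

variable (K) in
noncomputable def spinHookSum (Y : YoungDiagram) (t : K) : K :=
  t ^ (2 * Y.nStat) *
      ∏ c ∈ Y.cells, (1 + t ^ (2 * ((c.2 : ℤ) - c.1) + 1)) / (1 - t ^ (2 * Y.hookLen c)) +
    t ^ (2 * Y.nStat) *
      ∏ c ∈ Y.cells, (t ^ (2 * ((c.2 : ℤ) - c.1)) + t) / (1 - t ^ (2 * Y.hookLen c))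

theorem spinHookSum_inv (Y : YoungDiagram) (ht : t ≠ 0) :
    Y.spinHookSum K t⁻¹ = (-1) ^ Y.card * t ^ Y.card * Y.spinHookSum K t := by
  rw [spinHookSum, spinHookSum, Y.prod_cells_one_add_div_inv ht, Y.prod_cells_add_div_inv ht,
    inv_pow, pow_add t, pow_mul t 4, pow_mul t 2]
  field_simp
  ring

end YoungDiagram

theorem pow_mul_self_mul_prod_range_mul_one_sub_inv_pow {K : Type*} [Field K] {t : K}
    (ht : t ≠ 0) (k : ℕ) :
    t ^ (k * k) * ((∏ i ∈ Finset.range (k - 1), (1 - t⁻¹ ^ (2 * (i + 1)))) * (1 - t⁻¹ ^ k)) =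
      (-1) ^ k * ((∏ i ∈ Finset.range (k - 1), (1 - t ^ (2 * (i + 1)))) * (1 - t ^ k)) := by
  cases k with
  | zero => simp
  | succ k =>
    rw [Nat.add_sub_cancel, prod_range_one_sub_inv_pow ht, one_sub_inv_pow ht,
      show (k + 1) * (k + 1) = k * (k + 1) + (k + 1) by ring, pow_add t]
    field_simp
    ring

theorem spinFakeDegD_palindromic_general (K : Type*) [Field K] (Y : YoungDiagram) (n : ℕ)
    (hn : Y.card = n) (t : K) (ht : t ≠ 0) :
    spinFakeDegD K Y n t = t ^ (n * (n - 1)) * spinFakeDegD K Y n t⁻¹ := by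
  set R : K → K := fun s =>
    (∏ i ∈ Finset.range (n - 1), (1 - s ^ (2 * (i + 1)))) * (1 - s ^ n) with hR
  have hQ : ∀ s : K, spinFakeDegD K Y n s = Y.spinHookSum K s * R s := fun s => by
    rw [spinFakeDegD, mul_assoc]; rfl
  have hsign : (-1 : K) ^ n * (-1) ^ n = 1 := by rw [← mul_pow]; norm_num
  have hexp : n * (n - 1) + n = n * n := by cases n <;> simp [Nat.mul_succ]
  calc spinFakeDegD K Y n t
      = Y.spinHookSum K t * ((-1) ^ n * (-1) ^ n * R t) := by rw [hQ, hsign, one_mul]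
    _ = Y.spinHookSum K t * ((-1) ^ n * (t ^ (n * n) * R t⁻¹)) := by
        rw [mul_assoc, hR, pow_mul_self_mul_prod_range_mul_one_sub_inv_pow ht]
    _ = t ^ (n * (n - 1)) * spinFakeDegD K Y n t⁻¹ := by
        rw [hQ, Y.spinHookSum_inv ht, hn, ← hexp, pow_add]
        ring

/-- **Palindromicity of type `D_n` spin fake degrees (`n` odd)**: for a partition `λ` of
an odd `n`, `Q(λ,t) = t^{n(n-1)} Q(λ, 1/t)` as rational functions of `t` (stated for every
nonzero `t` in any field at which the denominators do not vanish). -/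
theorem spinFakeDegD_palindromic (K : Type*) [Field K] (Y : YoungDiagram) (n : ℕ)
    (hodd : Odd n) (hn : Y.card = n) (t : K) (ht : t ≠ 0)
    (hden : ∀ c ∈ Y.cells, (1 : K) - t ^ (2 * Y.hookLen c) ≠ 0) :
    spinFakeDegD K Y n t = t ^ (n * (n - 1)) * spinFakeDegD K Y n t⁻¹ :=
  spinFakeDegD_palindromic_general K Y n hn t ht
end

section
/- Let Cl_n be the Clifford algebra (c_i²=1, anticommuting) and set β_i = (c_i - c_{i+1})/√2 for 1 ≤ i ≤ n-1 and β_n = c_n. Then the elements β_1,…,β_n satisfy the type B_n spin relations: β_i² = 1 for all i; β_i β_{i+1} β_i = β_{i+1} β_i β_{i+1} for i ≤ n-2; (β_i β_j)² = -1 for |i-j| > 1; and (β_{n-1} β_n)⁴ = -1. -/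
/-!
For Clifford generators the anticommutator `c_i c_j + c_j c_i` is `2 δ_ij`, so the anticommutator
of two linear combinations of the `c_i` is twice the dot product of their coefficient vectors.
The `β_i` come from the vectors `(e_i - e_{i+1})/√2` and `e_n` of the root system `B_n`, giving
anticommutators `2` (diagonal), `-1` (neighbours), `0` (far apart) and `-√2` (last pair).
For involutions `u, v` with `uv + vu = t` the product `w = uv` satisfies `w² = t w - 1`; so `t = 0`
gives `w² = -1`, `t = -1` gives `uvu = -u - v = vuv`, and `t² = 2` gives `w⁴ = -1`.
-/

def anticomm {A : Type*} [Ring A] (x y : A) : A := x * y + y * x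

section Ring
variable {A : Type*} [Ring A] {u v : A}

theorem anticomm_comm (x y : A) : anticomm x y = anticomm y x := add_comm _ _

theorem anticomm_sub_left (x y z : A) : anticomm (x - y) z = anticomm x z - anticomm y z := by
  simp only [anticomm, sub_mul, mul_sub]; abel

theorem anticomm_sub_right (x y z : A) : anticomm x (y - z) = anticomm x y - anticomm x z := by
  simp only [anticomm, sub_mul, mul_sub]; abel

theorem anticomm_self_of_sq_eq_one (hu : u ^ 2 = 1) : anticomm u u = 2 := by
  rw [anticomm, ← sq, hu, one_add_one_eq_two]

theorem anticomm_eq_zero_iff : anticomm u v = 0 ↔ u * v = -(v * u) := by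
  rw [anticomm, add_eq_zero_iff_eq_neg]

theorem mul_sq_eq_neg_one_of_anticomm_eq_zero (hu : u ^ 2 = 1) (hv : v ^ 2 = 1)
    (huv : anticomm u v = 0) : (u * v) ^ 2 = -1 := by
  have hvu : v * u = -(u * v) := eq_neg_of_add_eq_zero_right huv
  calc (u * v) ^ 2 = u * (v * u) * v := by noncomm_ring
    _ = -(u ^ 2 * v ^ 2) := by rw [hvu]; noncomm_ring
    _ = -1 := by rw [hu, hv, one_mul]

theorem mul_mul_eq_of_anticomm_eq_neg_one (hu : u ^ 2 = 1) (hv : v ^ 2 = 1)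
    (huv : anticomm u v = -1) : u * v * u = v * u * v := by
  have hvu : v * u = -1 - u * v := eq_sub_of_add_eq' huv
  calc u * v * u = u * (v * u) := mul_assoc _ _ _
    _ = -u - u ^ 2 * v := by rw [hvu]; noncomm_ring
    _ = -v - u * v ^ 2 := by rw [hu, hv]; noncomm_ring
    _ = v * u * v := by rw [hvu]; noncomm_ring

end Ring

section Algebra
variable {R A : Type*} [CommRing R] [Ring A] [Algebra R A] {u v x y z : A}

theorem anticomm_smul_left (r : R) (x y : A) : anticomm (r • x) y = r • anticomm x y := by
  rw [anticomm, anticomm, smul_mul_assoc, mul_smul_comm, smul_add]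

theorem anticomm_smul_right (r : R) (x y : A) : anticomm x (r • y) = r • anticomm x y := by
  rw [anticomm, anticomm, smul_mul_assoc, mul_smul_comm, smul_add]

theorem mul_sq_of_anticomm_eq_algebraMap (hu : u ^ 2 = 1) (hv : v ^ 2 = 1) {t : R}
    (huv : anticomm u v = algebraMap R A t) : (u * v) ^ 2 = t • (u * v) - 1 := by
  have hvu : v * u = t • 1 - u * v := by
    rw [← Algebra.algebraMap_eq_smul_one]; exact eq_sub_of_add_eq' huv
  calc (u * v) ^ 2 = u * (v * u) * v := by noncomm_ring
    _ = t • (u * v) - u ^ 2 * v ^ 2 := by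
      rw [hvu]; simp only [mul_sub, sub_mul, mul_smul_comm, smul_mul_assoc, mul_one]; noncomm_ring
    _ = t • (u * v) - 1 := by rw [hu, hv, one_mul]

theorem mul_pow_four_eq_neg_one_of_anticomm_eq_algebraMap (hu : u ^ 2 = 1) (hv : v ^ 2 = 1)
    {t : R} (ht : t * t = 2) (huv : anticomm u v = algebraMap R A t) : (u * v) ^ 4 = -1 := by
  have hw := mul_sq_of_anticomm_eq_algebraMap hu hv huv
  calc (u * v) ^ 4 = ((u * v) ^ 2) ^ 2 := by rw [← pow_mul]
    _ = (t • (u * v) - 1) ^ 2 := by rw [hw]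
    _ = (t * t) • (u * v) ^ 2 - (2 * t) • (u * v) + 1 := by
      simp only [sq, mul_sub, sub_mul, smul_mul_smul_comm, mul_one, one_mul]; module
    _ = -1 := by rw [hw, ht]; module

variable {s : R}

theorem anticomm_smul_sub_eq_algebraMap (hy : y ^ 2 = 1) (hxy : anticomm x y = 0) :
    anticomm (s • (x - y)) y = algebraMap R A (-2 * s) := by
  rw [anticomm_smul_left, anticomm_sub_left, hxy, anticomm_self_of_sq_eq_one hy, zero_sub,
    Algebra.algebraMap_eq_smul_one, mul_comm, mul_smul, neg_smul, ofNat_smul_eq_nsmul, smul_neg]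
  simp

variable (hs : 2 * (s * s) = 1)
include hs

theorem smul_two_eq_one : (s * s) • (2 : A) = 1 := by
  rw [Algebra.smul_def, ← map_ofNat (algebraMap R A) 2, ← map_mul, mul_comm, hs, map_one]

theorem sq_smul_sub_eq_one (hx : x ^ 2 = 1) (hy : y ^ 2 = 1) (hxy : anticomm x y = 0) :
    (s • (x - y)) ^ 2 = 1 := by
  calc (s • (x - y)) ^ 2 = (s * s) • (x ^ 2 + y ^ 2 - anticomm x y) := by
        rw [smul_pow, anticomm]; noncomm_ring
    _ = 1 := by rw [hx, hy, hxy, sub_zero, one_add_one_eq_two, smul_two_eq_one hs]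

theorem anticomm_smul_sub_smul_sub_eq_neg_one (hy : y ^ 2 = 1) (hxy : anticomm x y = 0)
    (hxz : anticomm x z = 0) (hyz : anticomm y z = 0) :
    anticomm (s • (x - y)) (s • (y - z)) = -1 := by
  calc anticomm (s • (x - y)) (s • (y - z))
      = -((s * s) • anticomm y y) + (s * s) • (anticomm x y - anticomm x z + anticomm y z) := by
        simp only [anticomm_smul_left, anticomm_smul_right, anticomm_sub_left, anticomm_sub_right]
        module
    _ = -1 := by rw [hxy, hxz, hyz, anticomm_self_of_sq_eq_one hy, smul_two_eq_one hs]; simp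

end Algebra

/-- Let `Cl_n` be the complex Clifford algebra with generators `c_1, …, c_n` (`c_i² = 1`,
anticommuting; formalized as any complex algebra with elements satisfying these
relations), and set `β_i = (c_i - c_{i+1})/√2` for `1 ≤ i ≤ n-1` and `β_n = c_n`.
Then the `β_i` satisfy the type `B_n` spin relations: `β_i² = 1` for all `i`;
`β_i β_{i+1} β_i = β_{i+1} β_i β_{i+1}` for `i ≤ n-2`; `(β_i β_j)² = -1` for `|i-j| > 1`;
and `(β_{n-1} β_n)⁴ = -1`.  (Indices are 0-based: the generators are `β 0, …, β (n-1)`,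
with `β (n-1) = c_n`.) -/
theorem spin_type_B_relations {A : Type*} [Ring A] [Algebra ℂ A]
    (n : ℕ) (hn : 2 ≤ n) (c : Fin n → A)
    (hsq : ∀ i, c i ^ 2 = 1)
    (hanti : ∀ i j, i ≠ j → c i * c j = -(c j * c i))
    (β : ℕ → A)
    (hβ : ∀ (i : ℕ) (h : i + 1 < n),
      β i = ((Real.sqrt 2 : ℂ))⁻¹ • (c ⟨i, by omega⟩ - c ⟨i + 1, h⟩))
    (hβlast : β (n - 1) = c ⟨n - 1, by omega⟩) :
    (∀ i : ℕ, i < n → β i ^ 2 = 1) ∧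
    (∀ i : ℕ, i + 3 ≤ n → β i * β (i + 1) * β i = β (i + 1) * β i * β (i + 1)) ∧
    (∀ i j : ℕ, i < n → j < n → (i + 1 < j ∨ j + 1 < i) → (β i * β j) ^ 2 = -1) ∧
    (β (n - 2) * β (n - 1)) ^ 4 = -1 := by
  have hs : 2 * ((Real.sqrt 2 : ℂ)⁻¹ * (Real.sqrt 2 : ℂ)⁻¹) = 1 := by
    rw [← mul_inv, ← Complex.ofReal_mul, Real.mul_self_sqrt zero_le_two]; norm_num
  have hc : ∀ i j (hi : i < n) (hj : j < n), i ≠ j → anticomm (c ⟨i, hi⟩) (c ⟨j, hj⟩) = 0 :=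
    fun i j hi hj h => anticomm_eq_zero_iff.mpr (hanti _ _ (Fin.ne_of_val_ne h))
  have hβsq : ∀ i < n, β i ^ 2 = 1 := by
    intro i hi
    rcases Nat.lt_or_ge (i + 1) n with h | h
    · rw [hβ i h]; exact sq_smul_sub_eq_one hs (hsq _) (hsq _) (hc _ _ _ _ (by omega))
    · rw [show i = n - 1 by omega, hβlast]; exact hsq _
  have hfar : ∀ i j, j < n → i + 1 < j → anticomm (β i) (β j) = 0 := by
    intro i j hj hij
    rw [hβ i (by omega)]
    rcases Nat.lt_or_ge (j + 1) n with h | h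
    · rw [hβ j h]
      simp (disch := omega) only [anticomm_smul_left, anticomm_smul_right, anticomm_sub_left,
        anticomm_sub_right, hc, sub_zero, smul_zero]
    · obtain rfl : j = n - 1 := by omega
      rw [hβlast]
      simp (disch := omega) only [anticomm_smul_left, anticomm_sub_left, hc, sub_zero, smul_zero]
  refine ⟨hβsq, fun i hi => ?_, fun i j hi hj hij => ?_, ?_⟩
  · refine mul_mul_eq_of_anticomm_eq_neg_one (hβsq i (by omega)) (hβsq (i + 1) (by omega)) ?_
    rw [hβ i (by omega), hβ (i + 1) (by omega)]
    exact anticomm_smul_sub_smul_sub_eq_neg_one hs (hsq _) (hc _ _ _ _ (by omega))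
      (hc _ _ _ _ (by omega)) (hc _ _ _ _ (by omega))
  · refine mul_sq_eq_neg_one_of_anticomm_eq_zero (hβsq i hi) (hβsq j hj) ?_
    rcases hij with hij | hij
    · exact hfar i j hj hij
    · rw [anticomm_comm]; exact hfar j i hi hij
  · refine mul_pow_four_eq_neg_one_of_anticomm_eq_algebraMap (hβsq _ (by omega)) (hβsq _ (by omega))
      (t := -2 * (Real.sqrt 2 : ℂ)⁻¹) (by linear_combination 2 * hs) ?_
    have hlast : β (n - 1) = c ⟨n - 2 + 1, by omega⟩ := by rw [hβlast]; congr 2; omega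
    rw [hβ (n - 2) (by omega), hlast]
    exact anticomm_smul_sub_eq_algebraMap (hsq _) (hc _ _ _ _ (by omega))
end
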